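/- A family Φ = {φ_i}_{i=1}^{2n-1} in ℝ^n does phase retrieval if and only if Φ is full spark. -/

import Mathlib

/-!
Both sides are equivalent to the complement property: for every splitting of the index set into
`S` and its complement, one of `{φ i | i ∈ S}` and `{φ i | i ∉ S}` spans. If
`|⟪x, φ i⟫| = |⟪y, φ i⟫|` for all `i`, each `φ i` is orthogonal to `x - y` or to `x + y`, so
whichever part spans forces `x = y` or `x = -y`. Conversely, nonzero `u ⟂ φ S` and `v ⟂ φ Sᶜ`
give the counterexample `x = u + v`, `y = u - v`. Among `2n - 1` vectors one part of every
splitting has at least `n` vectors and the other at most `n - 1`, which turns the complement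
property into full spark and back.
-/

def FullSpark {m n : ℕ} (φ : Fin m → EuclideanSpace ℝ (Fin n)) : Prop :=
  ∀ s : Finset (Fin m), s.card = n →
    LinearIndependent ℝ (fun i : s => φ i)

open Submodule Finset

section

variable {K V ι : Type*} [DivisionRing K] [AddCommGroup V] [Module K V]

theorem finrank_le_card_of_span_image_eq_top {φ : ι → V} {s : Finset ι}
    (h : span K (φ '' s) = ⊤) : Module.finrank K V ≤ #s := by
  rw [Set.image_eq_range] at h
  calc Module.finrank K V = (Set.range fun i : (s : Set ι) => φ i).finrank K := by
        rw [Set.finrank, h, finrank_top]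
    _ ≤ #s := (finrank_range_le_card _).trans_eq (by simp)

end

section

variable {ι E : Type*} [NormedAddCommGroup E] [InnerProductSpace ℝ E]

theorem span_eq_top_iff_forall_inner_eq_zero [FiniteDimensional ℝ E] {S : Set E} :
    span ℝ S = ⊤ ↔ ∀ z : E, (∀ v ∈ S, inner ℝ z v = 0) → z = 0 := by
  rw [← orthogonal_eq_bot_iff, eq_bot_iff]
  refine forall_congr' fun z => imp_congr_left ?_
  exact (mem_orthogonal' _ z).trans (span_le (p := LinearMap.ker (innerₛₗ ℝ z)))

def DoesPhaseRetrieval (φ : ι → E) : Prop :=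
  ∀ x y : E, (∀ i, |inner ℝ x (φ i)| = |inner ℝ y (φ i)|) → x = y ∨ x = -y

def ComplementProperty (φ : ι → E) : Prop :=
  ∀ s : Set ι, span ℝ (φ '' s) = ⊤ ∨ span ℝ (φ '' sᶜ) = ⊤

variable [FiniteDimensional ℝ E] {φ : ι → E}

theorem ComplementProperty.doesPhaseRetrieval (hφ : ComplementProperty φ) :
    DoesPhaseRetrieval φ := by
  intro x y hxy
  have hsum : ∀ i, inner ℝ (x - y) (φ i) ≠ 0 → inner ℝ (x + y) (φ i) = 0 := fun i => by
    rw [inner_sub_left, inner_add_left, sub_ne_zero, add_eq_zero_iff_eq_neg]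
    exact (abs_eq_abs.mp (hxy i)).resolve_left
  rcases hφ {i | inner ℝ (x - y) (φ i) = 0} with h | h <;>
    simp only [span_eq_top_iff_forall_inner_eq_zero, Set.forall_mem_image] at h
  · exact .inl (sub_eq_zero.mp (h _ fun i hi => hi))
  · exact .inr (add_eq_zero_iff_eq_neg.mp (h _ fun i hi => hsum i hi))

theorem DoesPhaseRetrieval.complementProperty (hφ : DoesPhaseRetrieval φ) :
    ComplementProperty φ := by
  intro s
  by_contra! h
  simp only [ne_eq, span_eq_top_iff_forall_inner_eq_zero, Set.forall_mem_image, not_forall] at h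
  obtain ⟨⟨u, hu, hu0⟩, ⟨v, hv, hv0⟩⟩ := h
  have hmod : ∀ i, |inner ℝ (u + v) (φ i)| = |inner ℝ (u - v) (φ i)| := fun i => by
    by_cases hi : i ∈ s
    · simp [inner_add_left, inner_sub_left, hu hi]
    · simp [inner_add_left, inner_sub_left, hv hi]
  rcases hφ _ _ hmod with h | h
  · exact hv0 (by linear_combination (norm := module) (1 / 2 : ℝ) • h)
  · exact hu0 (by linear_combination (norm := module) (1 / 2 : ℝ) • h)

end

section

variable {m n : ℕ} {φ : Fin m → EuclideanSpace ℝ (Fin n)}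

theorem FullSpark.span_image_eq_top (hφ : FullSpark φ) {s : Finset (Fin m)} (hs : n ≤ #s) :
    span ℝ (φ '' s) = ⊤ := by
  obtain ⟨t, hts, ht⟩ := exists_subset_card_eq hs
  refine eq_top_mono (span_mono (Set.image_mono hts)) ?_
  rw [Set.image_eq_range]
  exact (hφ t ht).span_eq_top_of_card_eq_finrank' (by simp [ht])

theorem FullSpark.complementProperty (hφ : FullSpark φ) (hm : 2 * n - 1 ≤ m) :
    ComplementProperty φ := by
  classical
  intro s
  have hcard : #s.toFinset + #sᶜ.toFinset = m := by
    rw [Set.toFinset_compl, card_add_card_compl, Fintype.card_fin]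
  by_cases h : n ≤ #s.toFinset
  · left
    simpa using hφ.span_image_eq_top h
  · right
    simpa using hφ.span_image_eq_top (s := sᶜ.toFinset) (by omega)

theorem ComplementProperty.fullSpark (hφ : ComplementProperty φ) (hm : m ≤ 2 * n - 1) :
    FullSpark φ := by
  intro s hs
  obtain rfl | hn := n.eq_zero_or_pos
  · rw [card_eq_zero.mp hs]
    exact linearIndependent_empty_type
  have hspan : span ℝ (φ '' s) = ⊤ := by
    refine (hφ s).resolve_right fun h => ?_
    have := finrank_le_card_of_span_image_eq_top (s := sᶜ) (by rwa [coe_compl])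
    rw [finrank_euclideanSpace_fin, card_compl, Fintype.card_fin] at this
    omega
  exact linearIndependent_of_top_le_span_of_card_eq_finrank
    (by rw [Set.image_eq_range] at hspan; exact hspan.ge) (by simp [hs])

end

/-- a family of `2n - 1` vectors in `ℝ^n` does phase retrieval
iff it is full spark. -/
theorem phaseRetrieval_iff_fullSpark {n : ℕ}
    (φ : Fin (2 * n - 1) → EuclideanSpace ℝ (Fin n)) :
    (∀ x y : EuclideanSpace ℝ (Fin n),
        (∀ i, |(inner ℝ x (φ i) : ℝ)| = |(inner ℝ y (φ i) : ℝ)|) → x = y ∨ x = -y)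
      ↔ FullSpark φ :=
  ⟨fun h => (DoesPhaseRetrieval.complementProperty h).fullSpark le_rfl,
    fun h => (h.complementProperty le_rfl).doesPhaseRetrieval⟩
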